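/- arXiv:2512.13624 — 3 statements merged into one kernel-verified Lean document; each statement's English description precedes it below -/
import Mathlib

section
/- Let P be a probability measure on a product space of independent Bernoulli(p) edge variables indexed by the edges of ℤ^d (nearest-neighbor), and let E, F be increasing events. Then P(E ∘ F) ≤ P(E)P(F), where E ∘ F denotes disjoint occurrence: the event that there exist disjoint edge sets I, J such that the configuration restricted to I certifies E and the configuration restricted to J certifies F. -/
open MeasureTheory

/-- Nearest-neighbour edges of `ℤ^d`. -/
def Edge (d : ℕ) : Type :=
  {e : (Fin d → ℤ) × (Fin d → ℤ) // (∑ i, |e.1 i - e.2 i|) = 1}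

/-- Percolation configurations: each edge is open (`true`) or closed (`false`). -/
abbrev Config (d : ℕ) : Type := Edge d → Bool

/-- An event is increasing if it is stable under opening additional edges. -/
def IsIncreasingEvent {d : ℕ} (E : Set (Config d)) : Prop :=
  ∀ ω ω' : Config d, (∀ e, ω e = true → ω' e = true) → ω ∈ E → ω' ∈ E

/-- Disjoint occurrence `E ∘ F`: there exist disjoint edge sets `I, J` such that
the configuration restricted to `I` certifies `E` and the configuration
restricted to `J` certifies `F`. -/
def DisjOcc {d : ℕ} (E F : Set (Config d)) : Set (Config d) :=
  {ω | ∃ I J : Set (Edge d), Disjoint I J ∧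
    (∀ ω' : Config d, (∀ e ∈ I, ω' e = ω e) → ω' ∈ E) ∧
    (∀ ω' : Config d, (∀ e ∈ J, ω' e = ω e) → ω' ∈ F)}

/-!
On a finite window the inequality is proved by induction, conditioning on one edge `t`. Write
`A₀ = A` and `A₁ = insert t ⁻¹' A` for the sections of an up-set at `t`. With `t` closed,
`A □ B` is `A₀ □ B₀`; with `t` open it lies both in `A₁ □ B₁` and in `(A₁ □ B₀) ∪ (A₀ □ B₁)`,
two events whose intersection contains `A₀ □ B₀`. Averaging the two bounds with weights
`1 - p t` and `p t` gives the induction step.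

On all of `ℤ^d`, approximate `E` from outside by an open set `U` (the space of configurations is
compact and metrizable, so `P` is outer regular) and shrink `U` to its increasing interior, the
configurations lying above a finite set of open edges whose whole up-set stays in `U`. By
compactness this still contains `E`, and certificates for such sets can be cut down to finite sets
of open edges. Disjoint occurrence then becomes the increasing union over finite windows of
events that only see the window, to which the finite inequality applies.
-/

open Finset

section Finite

variable {ι : Type*}

def disjOccFinset (A B : Set (Finset ι)) : Set (Finset ι) :=
  {X | ∃ I ∈ A, ∃ J ∈ B, Disjoint I J ∧ I ⊆ X ∧ J ⊆ X}

lemma disjOccFinset_mono {A A' B B' : Set (Finset ι)} (hA : A ⊆ A') (hB : B ⊆ B') :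
    disjOccFinset A B ⊆ disjOccFinset A' B' := by
  rintro X ⟨I, hI, J, hJ, hIJ, hIX, hJX⟩
  exact ⟨I, hA hI, J, hB hJ, hIJ, hIX, hJX⟩

lemma isUpperSet_disjOccFinset (A B : Set (Finset ι)) : IsUpperSet (disjOccFinset A B) := by
  rintro X Y hXY ⟨I, hI, J, hJ, hIJ, hIX, hJX⟩
  exact ⟨I, hI, J, hJ, hIJ, hIX.trans hXY, hJX.trans hXY⟩

variable [DecidableEq ι] (p : ι → ℝ)

def bernoulliWeight (S X : Finset ι) : ℝ := ∏ e ∈ S, if e ∈ X then p e else 1 - p e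

noncomputable def bernoulliProb (S : Finset ι) (A : Set (Finset ι)) : ℝ :=
  ∑ X ∈ S.powerset, A.indicator (bernoulliWeight p S) X

variable {p}

lemma bernoulliWeight_nonneg (hp0 : ∀ e, 0 ≤ p e) (hp1 : ∀ e, p e ≤ 1) (S X : Finset ι) :
    0 ≤ bernoulliWeight p S X :=
  prod_nonneg fun e _ => by split_ifs <;> linarith [hp0 e, hp1 e]

lemma bernoulliWeight_insert {t : ι} {S : Finset ι} (ht : t ∉ S) {X : Finset ι} (htX : t ∉ X) :
    bernoulliWeight p (insert t S) X = (1 - p t) * bernoulliWeight p S X := by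
  rw [bernoulliWeight, prod_insert ht, if_neg htX, bernoulliWeight]

lemma bernoulliWeight_insert_insert {t : ι} {S : Finset ι} (ht : t ∉ S) (X : Finset ι) :
    bernoulliWeight p (insert t S) (insert t X) = p t * bernoulliWeight p S X := by
  rw [bernoulliWeight, prod_insert ht, if_pos (mem_insert_self t X), bernoulliWeight]
  congr 1
  refine prod_congr rfl fun e he => ?_
  simp only [mem_insert, ne_of_mem_of_not_mem he ht, false_or]

lemma bernoulliProb_nonneg (hp0 : ∀ e, 0 ≤ p e) (hp1 : ∀ e, p e ≤ 1) (S : Finset ι)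
    (A : Set (Finset ι)) : 0 ≤ bernoulliProb p S A :=
  sum_nonneg fun X _ => Set.indicator_nonneg (fun Y _ => bernoulliWeight_nonneg hp0 hp1 S Y) X

lemma bernoulliProb_mono (hp0 : ∀ e, 0 ≤ p e) (hp1 : ∀ e, p e ≤ 1) (S : Finset ι)
    {A B : Set (Finset ι)} (h : A ⊆ B) : bernoulliProb p S A ≤ bernoulliProb p S B :=
  sum_le_sum fun X _ =>
    Set.indicator_le_indicator_of_subset h (fun Y => bernoulliWeight_nonneg hp0 hp1 S Y) X

lemma bernoulliProb_union_add_inter (S : Finset ι) (A B : Set (Finset ι)) :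
    bernoulliProb p S (A ∪ B) + bernoulliProb p S (A ∩ B) =
      bernoulliProb p S A + bernoulliProb p S B := by
  simp only [bernoulliProb, ← sum_add_distrib]
  exact sum_congr rfl fun X _ => congrFun (Set.indicator_union_add_inter _ A B) X

lemma bernoulliProb_empty (A : Set (Finset ι)) :
    bernoulliProb p ∅ A = A.indicator 1 ∅ := by
  rw [bernoulliProb, powerset_empty, sum_singleton]
  rfl

lemma bernoulliProb_insert {t : ι} {S : Finset ι} (ht : t ∉ S) (A : Set (Finset ι)) :
    bernoulliProb p (insert t S) A =
      (1 - p t) * bernoulliProb p S A + p t * bernoulliProb p S (insert t ⁻¹' A) := by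
  classical
  simp only [bernoulliProb, sum_powerset_insert ht, mul_sum, Set.indicator_apply,
    Set.mem_preimage]
  congr 1 <;> refine sum_congr rfl fun X hX => ?_
  · rw [bernoulliWeight_insert ht fun h => ht (mem_powerset.mp hX h)]
    split_ifs <;> simp
  · rw [bernoulliWeight_insert_insert ht]
    split_ifs <;> simp

variable {A B : Set (Finset ι)}

lemma IsUpperSet.erase_mem_preimage_insert (hA : IsUpperSet A) {I : Finset ι} (hI : I ∈ A)
    (t : ι) : I.erase t ∈ insert t ⁻¹' A :=
  hA (insert_erase_subset t I) hI

lemma IsUpperSet.subset_preimage_insert (hA : IsUpperSet A) (t : ι) : A ⊆ insert t ⁻¹' A :=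
  fun I hI => hA (subset_insert t I) hI

lemma preimage_insert_disjOccFinset_subset (hA : IsUpperSet A) (hB : IsUpperSet B) (t : ι) :
    insert t ⁻¹' disjOccFinset A B ⊆ disjOccFinset (insert t ⁻¹' A) (insert t ⁻¹' B) := by
  rintro X ⟨I, hI, J, hJ, hIJ, hIX, hJX⟩
  exact ⟨I.erase t, hA.erase_mem_preimage_insert hI t, J.erase t,
    hB.erase_mem_preimage_insert hJ t,
    disjoint_of_subset_left (erase_subset t I) (disjoint_of_subset_right (erase_subset t J) hIJ),
    subset_insert_iff.mp hIX, subset_insert_iff.mp hJX⟩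

lemma preimage_insert_disjOccFinset_subset_union (hA : IsUpperSet A) (hB : IsUpperSet B)
    (t : ι) : insert t ⁻¹' disjOccFinset A B ⊆
      disjOccFinset (insert t ⁻¹' A) B ∪ disjOccFinset A (insert t ⁻¹' B) := by
  rintro X ⟨I, hI, J, hJ, hIJ, hIX, hJX⟩
  by_cases htJ : t ∈ J
  · have htI : t ∉ I := fun htI => disjoint_left.mp hIJ htI htJ
    exact Or.inr ⟨I, hI, J.erase t, hB.erase_mem_preimage_insert hJ t,
      disjoint_of_subset_right (erase_subset t J) hIJ, (subset_insert_iff_of_notMem htI).mp hIX,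
      subset_insert_iff.mp hJX⟩
  · exact Or.inl ⟨I.erase t, hA.erase_mem_preimage_insert hI t, J, hJ,
      disjoint_of_subset_left (erase_subset t I) hIJ, subset_insert_iff.mp hIX,
      (subset_insert_iff_of_notMem htJ).mp hJX⟩

theorem bernoulliProb_disjOccFinset_le (hp0 : ∀ e, 0 ≤ p e) (hp1 : ∀ e, p e ≤ 1)
    (hA : IsUpperSet A) (hB : IsUpperSet B) (S : Finset ι) :
    bernoulliProb p S (disjOccFinset A B) ≤ bernoulliProb p S A * bernoulliProb p S B := by
  induction S using Finset.induction_on generalizing A B with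
  | empty =>
    simp only [bernoulliProb_empty]
    by_cases hD : ∅ ∈ disjOccFinset A B
    · obtain ⟨I, hI, J, hJ, -, hI0, hJ0⟩ := id hD
      rw [subset_empty.mp hI0] at hI
      rw [subset_empty.mp hJ0] at hJ
      simp [Set.indicator_of_mem hD, Set.indicator_of_mem hI, Set.indicator_of_mem hJ]
    · rw [Set.indicator_of_notMem hD]
      exact mul_nonneg (Set.indicator_nonneg (fun _ _ => zero_le_one) _)
        (Set.indicator_nonneg (fun _ _ => zero_le_one) _)
  | insert t S ht ih =>
    have hA₁ : IsUpperSet (insert t ⁻¹' A) := hA.preimage fun _ _ => insert_subset_insert t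
    have hB₁ : IsUpperSet (insert t ⁻¹' B) := hB.preimage fun _ _ => insert_subset_insert t
    have hm_le : bernoulliProb p S (insert t ⁻¹' disjOccFinset A B) ≤
        bernoulliProb p S (disjOccFinset (insert t ⁻¹' A) (insert t ⁻¹' B)) :=
      bernoulliProb_mono hp0 hp1 S (preimage_insert_disjOccFinset_subset hA hB t)
    have hm_add_le : bernoulliProb p S (insert t ⁻¹' disjOccFinset A B) +
          bernoulliProb p S (disjOccFinset A B) ≤
        bernoulliProb p S (disjOccFinset (insert t ⁻¹' A) B) +
          bernoulliProb p S (disjOccFinset A (insert t ⁻¹' B)) := by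
      refine le_of_le_of_eq (add_le_add ?_ ?_) (bernoulliProb_union_add_inter S _ _)
      exacts [bernoulliProb_mono hp0 hp1 S (preimage_insert_disjOccFinset_subset_union hA hB t),
        bernoulliProb_mono hp0 hp1 S (Set.subset_inter
          (disjOccFinset_mono (hA.subset_preimage_insert t) subset_rfl)
          (disjOccFinset_mono subset_rfl (hB.subset_preimage_insert t)))]
    have h₀₀ := ih hA hB
    have h₁₀ := ih hA₁ hB
    have h₀₁ := ih hA hB₁
    have h₁₁ := ih hA₁ hB₁
    have hq : 0 ≤ 1 - p t := sub_nonneg.mpr (hp1 t)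
    simp only [bernoulliProb_insert ht]
    -- with `q = 1 - p t`, the left side is `q² x + q (p t) (x + m) + (p t)² m`, where `x` and `m`
    -- are the probabilities of the two sections of `disjOccFinset A B` at `t`
    nlinarith [mul_le_mul_of_nonneg_left h₀₀ (mul_nonneg hq hq),
      mul_le_mul_of_nonneg_left hm_add_le (mul_nonneg hq (hp0 t)),
      mul_le_mul_of_nonneg_left h₁₀ (mul_nonneg hq (hp0 t)),
      mul_le_mul_of_nonneg_left h₀₁ (mul_nonneg hq (hp0 t)),
      mul_le_mul_of_nonneg_left hm_le (mul_nonneg (hp0 t) (hp0 t)),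
      mul_le_mul_of_nonneg_left h₁₁ (mul_nonneg (hp0 t) (hp0 t))]

end Finite

section Config

variable {ι : Type*}

def openEdgesIn (T : Finset ι) (ω : ι → Bool) : Finset ι := {e ∈ T | ω e = true}

lemma openEdgesIn_mono {T T' : Finset ι} (h : T ⊆ T') (ω : ι → Bool) :
    openEdgesIn T ω ⊆ openEdgesIn T' ω :=
  filter_subset_filter _ h

variable [DecidableEq ι]

def configOf (X : Finset ι) : ι → Bool := fun e => decide (e ∈ X)

lemma configOf_le_iff {X : Finset ι} {ω : ι → Bool} : configOf X ≤ ω ↔ ∀ e ∈ X, ω e = true := by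
  simp [configOf, Pi.le_def, Bool.le_iff_imp]

lemma monotone_configOf : Monotone (configOf : Finset ι → ι → Bool) :=
  fun _ _ h => configOf_le_iff.mpr fun e he => by simpa [configOf] using h he

lemma configOf_openEdgesIn_le (T : Finset ι) (ω : ι → Bool) : configOf (openEdgesIn T ω) ≤ ω :=
  configOf_le_iff.mpr fun _ he => (mem_filter.mp he).2

lemma openEdgesIn_preimage_singleton {T X : Finset ι} (hX : X ⊆ T) :
    openEdgesIn T ⁻¹' {X} = {ω | ∀ e ∈ T, ω e = decide (e ∈ X)} := by
  ext ω
  simp only [Set.mem_preimage, Set.mem_singleton_iff, Set.mem_ofPred_eq, Finset.ext_iff,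
    openEdgesIn, mem_filter]
  refine ⟨fun h e he => ?_, fun h e => by grind⟩
  cases hω : ω e <;> grind

variable {P : Measure (ι → Bool)} {p : ι → ℝ}

lemma measure_openEdgesIn_preimage (hp0 : ∀ e, 0 ≤ p e) (hp1 : ∀ e, p e ≤ 1)
    (hP : ∀ (S : Finset ι) (b : ι → Bool),
      P {ω | ∀ e ∈ S, ω e = b e} = ∏ e ∈ S, ENNReal.ofReal (if b e then p e else 1 - p e))
    (T : Finset ι) (C : Set (Finset ι)) :
    P (openEdgesIn T ⁻¹' C) = ENNReal.ofReal (bernoulliProb p T C) := by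
  classical
  have hC : openEdgesIn T ⁻¹' C = openEdgesIn T ⁻¹' ↑{X ∈ T.powerset | X ∈ C} := by
    ext ω
    simp [openEdgesIn, filter_subset]
  have hfibre : ∀ X ∈ T.powerset, P (openEdgesIn T ⁻¹' {X}) =
      ENNReal.ofReal (bernoulliWeight p T X) := by
    intro X hX
    rw [openEdgesIn_preimage_singleton (mem_powerset.mp hX), hP, bernoulliWeight,
      ENNReal.ofReal_prod_of_nonneg fun e _ => by split_ifs <;> linarith [hp0 e, hp1 e]]
    exact prod_congr rfl fun e _ => by by_cases he : e ∈ X <;> simp [he]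
  rw [hC, ← sum_measure_preimage_singleton, sum_filter, bernoulliProb,
    ENNReal.ofReal_sum_of_nonneg]
  · refine sum_congr rfl fun X hX => ?_
    simp only [Set.indicator_apply]
    split_ifs
    · exact hfibre X hX
    · simp
  · exact fun X _ => Set.indicator_nonneg (fun Y _ => bernoulliWeight_nonneg hp0 hp1 T Y) X
  · intro X hX
    rw [openEdgesIn_preimage_singleton (mem_powerset.mp (mem_filter.mp hX).1)]
    exact MeasurableSet.pi T.countable_toSet fun _ _ => measurableSet_singleton _

lemma measure_openEdgesIn_preimage_disjOccFinset_le (hp0 : ∀ e, 0 ≤ p e) (hp1 : ∀ e, p e ≤ 1)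
    (hP : ∀ (S : Finset ι) (b : ι → Bool),
      P {ω | ∀ e ∈ S, ω e = b e} = ∏ e ∈ S, ENNReal.ofReal (if b e then p e else 1 - p e))
    {A B : Set (Finset ι)} (hA : IsUpperSet A) (hB : IsUpperSet B) (T : Finset ι) :
    P (openEdgesIn T ⁻¹' disjOccFinset A B) ≤
      P (openEdgesIn T ⁻¹' A) * P (openEdgesIn T ⁻¹' B) := by
  simp only [measure_openEdgesIn_preimage hp0 hp1 hP]
  rw [← ENNReal.ofReal_mul (bernoulliProb_nonneg hp0 hp1 T A)]
  exact ENNReal.ofReal_le_ofReal (bernoulliProb_disjOccFinset_le hp0 hp1 hA hB T)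

lemma IsUpperSet.openEdgesIn_preimage_configOf_preimage_subset {W : Set (ι → Bool)}
    (hW : IsUpperSet W) (T : Finset ι) : openEdgesIn T ⁻¹' (configOf ⁻¹' W) ⊆ W :=
  fun ω hω => hW (configOf_openEdgesIn_le T ω) hω

def upInterior (U : Set (ι → Bool)) : Set (ι → Bool) :=
  {ω | ∃ K : Finset ι, configOf K ≤ ω ∧ Set.Ici (configOf K) ⊆ U}

variable {U : Set (ι → Bool)}

lemma upInterior_subset : upInterior U ⊆ U :=
  fun _ ⟨_, hK, hKU⟩ => hKU hK

lemma isUpperSet_upInterior : IsUpperSet (upInterior U) :=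
  fun _ _ h ⟨K, hK, hKU⟩ => ⟨K, hK.trans h, hKU⟩

lemma Ici_configOf (K : Finset ι) :
    Set.Ici (configOf K) = (K : Set ι).pi fun _ => {true} := by
  ext ω
  simp [configOf_le_iff]

lemma isClosed_Ici_configOf (K : Finset ι) : IsClosed (Set.Ici (configOf K)) :=
  Ici_configOf K ▸ isClosed_set_pi fun _ _ => isClosed_discrete _

lemma le_iff_forall_configOf_openEdgesIn_le {ω x : ι → Bool} :
    ω ≤ x ↔ ∀ I : Finset ι, configOf (openEdgesIn I ω) ≤ x := by
  refine ⟨fun h I => (configOf_openEdgesIn_le I ω).trans h, fun h e => Bool.le_iff_imp.mpr ?_⟩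
  intro he
  exact configOf_le_iff.mp (h {e}) e (by simp [openEdgesIn, he])

lemma IsUpperSet.subset_upInterior {E : Set (ι → Bool)} (hE : IsUpperSet E) (hU : IsOpen U)
    (hEU : E ⊆ U) : E ⊆ upInterior U := by
  intro ω hω
  obtain ⟨I, hI⟩ := exists_subset_nhds_of_isCompact'
    (V := fun I : Finset ι => Set.Ici (configOf (openEdgesIn I ω)))
    (fun I J => ⟨I ∪ J,
      Set.Ici_subset_Ici.mpr (monotone_configOf (openEdgesIn_mono subset_union_left ω)),
      Set.Ici_subset_Ici.mpr (monotone_configOf (openEdgesIn_mono subset_union_right ω))⟩)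
    (fun I => (isClosed_Ici_configOf _).isCompact) (fun I => isClosed_Ici_configOf _)
    (fun x hx => hU.mem_nhds (hEU (hE (le_iff_forall_configOf_openEdgesIn_le.mpr
      (Set.mem_iInter.mp hx)) hω)))
  exact ⟨openEdgesIn I ω, configOf_openEdgesIn_le I ω, hI⟩

lemma exists_configOf_mem_upInterior {ω : ι → Bool} {I : Set ι}
    (hI : ∀ ω' : ι → Bool, (∀ e ∈ I, ω' e = ω e) → ω' ∈ upInterior U) :
    ∃ K : Finset ι, ↑K ⊆ I ∧ configOf K ≤ ω ∧ configOf K ∈ upInterior U := by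
  classical
  obtain ⟨K, hKχ, hKU⟩ := hI (fun e => decide (e ∈ I ∧ ω e = true))
    fun e he => by cases ω e <;> simp [he]
  have hK : ∀ e ∈ K, e ∈ I ∧ ω e = true := fun e he => by
    simpa using configOf_le_iff.mp hKχ e he
  exact ⟨K, fun e he => (hK e he).1, configOf_le_iff.mpr fun e he => (hK e he).2,
    K, le_rfl, hKU⟩

end Config

instance (d : ℕ) : Countable (Edge d) := by
  unfold Edge; infer_instance

instance (d : ℕ) : DecidableEq (Edge d) := by
  unfold Edge; infer_instance

variable {d : ℕ}

lemma IsIncreasingEvent.isUpperSet {E : Set (Config d)} (hE : IsIncreasingEvent E) :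
    IsUpperSet E :=
  fun ω ω' h hω => hE ω ω' (fun e => Bool.le_iff_imp.mp (h e)) hω

lemma disjOcc_mono {E F U V : Set (Config d)} (hEU : E ⊆ U) (hFV : F ⊆ V) :
    DisjOcc E F ⊆ DisjOcc U V :=
  fun _ ⟨I, J, hIJ, hI, hJ⟩ => ⟨I, J, hIJ, fun ω' h => hEU (hI ω' h), fun ω' h => hFV (hJ ω' h)⟩

lemma disjOcc_upInterior_subset_iUnion (U V : Set (Config d)) :
    DisjOcc (upInterior U) (upInterior V) ⊆ ⋃ T : Finset (Edge d),
      openEdgesIn T ⁻¹' disjOccFinset (configOf ⁻¹' upInterior U) (configOf ⁻¹' upInterior V) := by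
  rintro ω ⟨I, J, hIJ, hI, hJ⟩
  obtain ⟨K, hKI, hKω, hKU⟩ := exists_configOf_mem_upInterior hI
  obtain ⟨L, hLJ, hLω, hLV⟩ := exists_configOf_mem_upInterior hJ
  refine Set.mem_iUnion.mpr ⟨K ∪ L, K, hKU, L, hLV,
    disjoint_coe.mp (hIJ.mono hKI hLJ), fun e he => ?_, fun e he => ?_⟩
  · exact mem_filter.mpr ⟨mem_union_left L he, configOf_le_iff.mp hKω e he⟩
  · exact mem_filter.mpr ⟨mem_union_right K he, configOf_le_iff.mp hLω e he⟩

lemma measure_disjOcc_upInterior_le {p : Edge d → ℝ} (hp0 : ∀ e, 0 ≤ p e)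
    (hp1 : ∀ e, p e ≤ 1) {P : Measure (Config d)}
    (hP : ∀ (S : Finset (Edge d)) (b : Edge d → Bool),
      P {ω | ∀ e ∈ S, ω e = b e} = ∏ e ∈ S, ENNReal.ofReal (if b e then p e else 1 - p e))
    (U V : Set (Config d)) :
    P (DisjOcc (upInterior U) (upInterior V)) ≤ P (upInterior U) * P (upInterior V) := by
  have hU : IsUpperSet (upInterior U) := isUpperSet_upInterior
  have hV : IsUpperSet (upInterior V) := isUpperSet_upInterior
  calc P (DisjOcc (upInterior U) (upInterior V))
      ≤ P (⋃ T : Finset (Edge d), openEdgesIn T ⁻¹'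
          disjOccFinset (configOf ⁻¹' upInterior U) (configOf ⁻¹' upInterior V)) :=
        measure_mono (disjOcc_upInterior_subset_iUnion U V)
    _ = ⨆ T : Finset (Edge d), P (openEdgesIn T ⁻¹'
          disjOccFinset (configOf ⁻¹' upInterior U) (configOf ⁻¹' upInterior V)) :=
        Monotone.measure_iUnion fun T T' h ω hω =>
          isUpperSet_disjOccFinset _ _ (openEdgesIn_mono h ω) hω
    _ ≤ P (upInterior U) * P (upInterior V) := iSup_le fun T =>
        (measure_openEdgesIn_preimage_disjOccFinset_le hp0 hp1 hP
          (hU.preimage monotone_configOf) (hV.preimage monotone_configOf) T).trans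
        (mul_le_mul' (measure_mono (hU.openEdgesIn_preimage_configOf_preimage_subset T))
          (measure_mono (hV.openEdgesIn_preimage_configOf_preimage_subset T)))

theorem stmt_9_general (d : ℕ) (p : ℝ) (hp0 : 0 ≤ p) (hp1 : p ≤ 1)
    (P : Measure (Config d)) [IsProbabilityMeasure P]
    (hP : ∀ (S : Finset (Edge d)) (b : Edge d → Bool),
      P {ω : Config d | ∀ e ∈ S, ω e = b e}
        = ∏ e ∈ S, ENNReal.ofReal (if b e then p else 1 - p))
    (E F : Set (Config d))
    (hEinc : IsIncreasingEvent E) (hFinc : IsIncreasingEvent F) :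
    P (DisjOcc E F) ≤ P E * P F := by
  refine ENNReal.le_mul_of_forall_lt (Or.inr (measure_ne_top P F)) (Or.inl (measure_ne_top P E))
    fun r hr s hs => ?_
  obtain ⟨U, hEU, hU, hUr⟩ := E.exists_isOpen_lt_of_lt r hr
  obtain ⟨V, hFV, hV, hVs⟩ := F.exists_isOpen_lt_of_lt s hs
  calc P (DisjOcc E F)
      ≤ P (DisjOcc (upInterior U) (upInterior V)) :=
        measure_mono (disjOcc_mono (hEinc.isUpperSet.subset_upInterior hU hEU)
          (hFinc.isUpperSet.subset_upInterior hV hFV))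
    _ ≤ P (upInterior U) * P (upInterior V) :=
        measure_disjOcc_upInterior_le (p := fun _ => p) (fun _ => hp0) (fun _ => hp1) hP U V
    _ ≤ r * s := mul_le_mul' ((measure_mono upInterior_subset).trans hUr.le)
        ((measure_mono upInterior_subset).trans hVs.le)

/-- The van den Berg–Kesten inequality: for the Bernoulli(p) product measure `P`
on the edges of `ℤ^d` (characterized by its values on finite cylinders) and
increasing measurable events `E, F`, one has `P(E ∘ F) ≤ P(E) P(F)`. -/
theorem stmt_9 (d : ℕ) (p : ℝ) (hp0 : 0 ≤ p) (hp1 : p ≤ 1)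
    (P : Measure (Config d)) [IsProbabilityMeasure P]
    (hP : ∀ (S : Finset (Edge d)) (b : Edge d → Bool),
      P {ω : Config d | ∀ e ∈ S, ω e = b e}
        = ∏ e ∈ S, ENNReal.ofReal (if b e then p else 1 - p))
    (E F : Set (Config d)) (hE : MeasurableSet E) (hF : MeasurableSet F)
    (hEinc : IsIncreasingEvent E) (hFinc : IsIncreasingEvent F) :
    P (DisjOcc E F) ≤ P E * P F :=
  stmt_9_general d p hp0 hp1 P hP E F hEinc hFinc
end

section
/- Let d ≥ 3 and n ≥ 0 an integer. Then Σ_{x ∈ ℤ^d, x₁ = n} (1 + min(n, |x|)) / (1 + |x|^d) ≤ C(d), with C(d) independent of n, where |·| is the ℓ^∞ norm on ℤ^d. -/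
/-!
Write `|x|` for the sup norm and `n = |a|`, so that `|x| ≥ n` whenever `x e = a`. The points of
the hyperplane `{x e = a}` with `|x| ≤ m` form a box of `(2m+1)^(d-1)` points, so for `m > n` the
shell `|x| = m` of the hyperplane has at most `(d-1)(2m+1)^(d-1)/m` points. Hence the shell
`m = n` contributes at most `(2n+1)^(d-1)(1+n)/(1+n^d) ≤ 3^d`, and the shells `m > n` contribute
at most `(d-1) 3^d (1+n) ∑_{m>n} m⁻² ≤ 2(d-1) 3^d`.
-/

open Finset

namespace LatticeHyperplane

variable {d : ℕ}

def supNatAbs (x : Fin d → ℤ) : ℕ := univ.sup fun j => (x j).natAbs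

lemma natAbs_le_supNatAbs (x : Fin d → ℤ) (j : Fin d) : (x j).natAbs ≤ supNatAbs x :=
  le_sup (f := fun j => (x j).natAbs) (mem_univ j)

lemma norm_eq_supNatAbs (x : Fin d → ℤ) : ‖x‖ = supNatAbs x := by
  have : ‖x‖₊ = supNatAbs x := by
    rw [Pi.nnnorm_def, supNatAbs,
      apply_sup_eq_sup_comp (Nat.cast : ℕ → NNReal) (fun a b => by simp [Nat.cast_max])
        (by simp)]
    exact congrArg _ (funext fun j => (NNReal.natCast_natAbs _).symm)
  rw [← coe_nnnorm, this, NNReal.coe_natCast]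

noncomputable def hyperplaneBox (e : Fin d) (a : ℤ) (m : ℕ) : Finset (Fin d → ℤ) :=
  Fintype.piFinset fun j => if j = e then {a} else Icc (-(m : ℤ)) m

lemma card_hyperplaneBox (e : Fin d) (a : ℤ) (m : ℕ) :
    #(hyperplaneBox e a m) = (2 * m + 1) ^ (d - 1) := by
  simp [hyperplaneBox, Fintype.card_piFinset, apply_ite card, prod_ite, filter_ne']
  congr 1
  omega

lemma hyperplaneBox_mono (e : Fin d) (a : ℤ) {m m' : ℕ} (h : m ≤ m') :
    hyperplaneBox e a m ⊆ hyperplaneBox e a m' := by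
  intro x
  simp only [hyperplaneBox, Fintype.mem_piFinset]
  refine forall_imp fun j => ?_
  split_ifs
  · exact id
  · simp only [mem_Icc]; omega

lemma mem_hyperplaneBox {e : Fin d} {a : ℤ} {x : Fin d → ℤ} (ha : x e = a) {m : ℕ}
    (hm : supNatAbs x ≤ m) : x ∈ hyperplaneBox e a m := by
  simp only [hyperplaneBox, Fintype.mem_piFinset]
  intro j
  split_ifs with hj
  · simp [hj, ha]
  · have := natAbs_le_supNatAbs x j
    simp only [mem_Icc]; omega

lemma supNatAbs_le_of_mem_hyperplaneBox {e : Fin d} {a : ℤ} {m : ℕ} {x : Fin d → ℤ}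
    (hx : x ∈ hyperplaneBox e a m) : supNatAbs x ≤ max a.natAbs m := by
  refine Finset.sup_le fun j _ => ?_
  have := Fintype.mem_piFinset.mp hx j
  split_ifs at this with hj
  · simp_all
  · simp only [mem_Icc] at this; omega

lemma two_mul_add_one_pow_sub_pow_mul_le (m k : ℕ) :
    ((2 * m + 1) ^ k - (2 * m - 1) ^ k) * m ≤ k * (2 * m + 1) ^ k := by
  rcases Nat.eq_zero_or_pos m with rfl | hm
  · simp
  rcases k with _ | k
  · simp
  have hle : (2 * m - 1) ^ (k + 1) ≤ (2 * m + 1) ^ (k + 1) := Nat.pow_le_pow_left (by omega) _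
  have h := abs_pow_sub_pow_le (α := ℤ) (2 * m + 1) (2 * m - 1) (k + 1)
  rw [abs_of_nonneg (by positivity : (0 : ℤ) ≤ 2 * m + 1),
    abs_of_nonneg (by omega : (0 : ℤ) ≤ 2 * m - 1), max_eq_left (by omega), Nat.add_sub_cancel,
    show (2 * (m : ℤ) + 1 - (2 * m - 1)) = 2 by ring, abs_two] at h
  zify [hle, (by omega : 1 ≤ 2 * m)]
  push_cast at h
  nlinarith [le_abs_self ((2 * (m : ℤ) + 1) ^ (k + 1) - (2 * m - 1) ^ (k + 1)),
    pow_succ (2 * (m : ℤ) + 1) k, mul_le_mul_of_nonneg_right h (by positivity : (0 : ℤ) ≤ m),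
    (by positivity : (0 : ℤ) ≤ (2 * m + 1) ^ k)]

lemma card_hyperplaneBox_sdiff_mul_le (e : Fin d) (a : ℤ) (m : ℕ) :
    #(hyperplaneBox e a m \ hyperplaneBox e a (m - 1)) * m ≤ (d - 1) * (2 * m + 1) ^ (d - 1) := by
  rcases Nat.eq_zero_or_pos m with rfl | hm
  · simp
  rw [card_sdiff_of_subset (hyperplaneBox_mono e a (Nat.sub_le m 1)), card_hyperplaneBox,
    card_hyperplaneBox, show 2 * (m - 1) + 1 = 2 * m - 1 by omega]
  exact two_mul_add_one_pow_sub_pow_mul_le m (d - 1)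

lemma two_mul_add_one_pow_le {m : ℕ} (hm : 1 ≤ m) (k : ℕ) :
    (2 * m + 1) ^ k ≤ 3 ^ k * m ^ k := by
  rw [← mul_pow]
  exact Nat.pow_le_pow_left (by omega) k

lemma central_term_le (hd : 1 ≤ d) (n : ℕ) :
    ((2 * n + 1) ^ (d - 1) * (1 + n) : ℝ) ≤ 3 ^ d * (1 + n ^ d) := by
  have key : (2 * n + 1) ^ (d - 1) * (1 + n) ≤ 3 ^ d * (1 + n ^ d) := by
    calc (2 * n + 1) ^ (d - 1) * (1 + n) ≤ (2 * n + 1) ^ (d - 1) * (2 * n + 1) :=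
        Nat.mul_le_mul_left _ (by omega)
      _ = (2 * n + 1) ^ d := pow_sub_one_mul (by omega) _
      _ ≤ 3 ^ d * (1 + n ^ d) := by
        rcases Nat.eq_zero_or_pos n with rfl | hn
        · simpa [zero_pow (by omega : d ≠ 0)] using Nat.one_le_pow d 3 (by norm_num)
        · grw [two_mul_add_one_pow_le hn]; gcongr; omega
  exact_mod_cast key

lemma shell_term_le (hd : 1 ≤ d) {m c : ℕ} (hm : 1 ≤ m)
    (hc : c * m ≤ (d - 1) * (2 * m + 1) ^ (d - 1)) :
    (c / (1 + m ^ d) : ℝ) ≤ (d - 1 : ℕ) * 3 ^ d * ((m : ℝ) ^ 2)⁻¹ := by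
  have key : c * m ^ 2 ≤ (d - 1) * 3 ^ d * (1 + m ^ d) :=
    calc c * m ^ 2 = c * m * m := by ring
      _ ≤ (d - 1) * (2 * m + 1) ^ (d - 1) * m := by gcongr
      _ ≤ (d - 1) * (3 ^ (d - 1) * m ^ (d - 1)) * m := by grw [two_mul_add_one_pow_le hm]
      _ = (d - 1) * 3 ^ (d - 1) * m ^ d := by
        rw [mul_assoc, mul_assoc, pow_sub_one_mul (by omega)]
        ring
      _ ≤ (d - 1) * 3 ^ d * (1 + m ^ d) := by gcongr <;> omega
  rw [← div_eq_mul_inv, div_le_div_iff₀ (by positivity) (by positivity)]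
  exact_mod_cast key

section Fibers

variable {e : Fin d} {a : ℤ} {s : Finset (Fin d → ℤ)}

lemma card_filter_supNatAbs_eq_natAbs_le (hs : ∀ x ∈ s, x e = a) :
    #{x ∈ s | supNatAbs x = a.natAbs} ≤ (2 * a.natAbs + 1) ^ (d - 1) := by
  rw [← card_hyperplaneBox e a]
  refine card_le_card fun x hx => ?_
  rw [mem_filter] at hx
  exact mem_hyperplaneBox (hs x hx.1) hx.2.le

lemma card_filter_supNatAbs_eq_mul_le (hs : ∀ x ∈ s, x e = a) {m : ℕ}
    (hm : a.natAbs < m) :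
    #{x ∈ s | supNatAbs x = m} * m ≤ (d - 1) * (2 * m + 1) ^ (d - 1) := by
  refine le_trans (Nat.mul_le_mul_right _ (card_le_card fun x hx => ?_))
    (card_hyperplaneBox_sdiff_mul_le e a m)
  rw [mem_filter] at hx
  refine mem_sdiff.mpr ⟨mem_hyperplaneBox (hs x hx.1) hx.2.le, fun hx' => ?_⟩
  have := supNatAbs_le_of_mem_hyperplaneBox hx'
  omega

lemma card_filter_supNatAbs_eq_natAbs_mul_div_le (hs : ∀ x ∈ s, x e = a) :
    #{x ∈ s | supNatAbs x = a.natAbs} * ((1 + a.natAbs) / (1 + a.natAbs ^ d) : ℝ)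
      ≤ 3 ^ d := by
  grw [card_filter_supNatAbs_eq_natAbs_le hs, mul_div_assoc', div_le_iff₀ (by positivity)]
  exact_mod_cast central_term_le e.pos a.natAbs

lemma card_filter_supNatAbs_eq_mul_div_le (hs : ∀ x ∈ s, x e = a) {m : ℕ}
    (hm : a.natAbs < m) :
    #{x ∈ s | supNatAbs x = m} * ((1 + a.natAbs) / (1 + m ^ d) : ℝ)
      ≤ (1 + a.natAbs) * ((d - 1 : ℕ) * 3 ^ d * ((m : ℝ) ^ 2)⁻¹) := by
  rw [mul_div_left_comm]
  gcongr
  exact shell_term_le e.pos (by omega) (card_filter_supNatAbs_eq_mul_le hs hm)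

end Fibers

theorem sum_div_one_add_supNatAbs_pow_le (e : Fin d) (a : ℤ) (s : Finset (Fin d → ℤ))
    (hs : ∀ x ∈ s, x e = a) :
    ∑ x ∈ s, (1 + a.natAbs : ℝ) / (1 + (supNatAbs x : ℝ) ^ d) ≤ (2 * d - 1) * 3 ^ d := by
  have hd : 1 ≤ d := e.pos
  set n := a.natAbs
  set N := s.sup supNatAbs + 1
  set f : ℕ → ℝ := fun m => (1 + n) / (1 + m ^ d)
  have himage : s.image supNatAbs ⊆ insert n (Ioo n N) := by
    intro m hm
    obtain ⟨x, hx, rfl⟩ := mem_image.mp hm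
    have h1 : n ≤ supNatAbs x := by simpa [hs x hx] using natAbs_le_supNatAbs x e
    have h2 : supNatAbs x < N := Nat.lt_succ_of_le (le_sup hx)
    rw [mem_insert, mem_Ioo]
    omega
  calc ∑ x ∈ s, f (supNatAbs x)
      = ∑ m ∈ s.image supNatAbs, #{x ∈ s | supNatAbs x = m} • f m := sum_comp f supNatAbs
    _ ≤ ∑ m ∈ insert n (Ioo n N), #{x ∈ s | supNatAbs x = m} • f m :=
        sum_le_sum_of_subset_of_nonneg himage fun _ _ _ => by positivity
    _ = #{x ∈ s | supNatAbs x = n} • f n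
          + ∑ m ∈ Ioo n N, #{x ∈ s | supNatAbs x = m} • f m :=
        sum_insert (by simp)
    _ ≤ 3 ^ d + ∑ m ∈ Ioo n N, (1 + n) * ((d - 1 : ℕ) * 3 ^ d * ((m : ℝ) ^ 2)⁻¹) :=
        add_le_add ((nsmul_eq_mul _ _).trans_le (card_filter_supNatAbs_eq_natAbs_mul_div_le hs))
          (sum_le_sum fun m hm => (nsmul_eq_mul _ _).trans_le
            (card_filter_supNatAbs_eq_mul_div_le hs (mem_Ioo.mp hm).1))
    _ = 3 ^ d + (1 + n) * (d - 1 : ℕ) * 3 ^ d * ∑ m ∈ Ioo n N, ((m : ℝ) ^ 2)⁻¹ := by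
        simp only [mul_sum, mul_assoc]
    _ ≤ 3 ^ d + (1 + n) * (d - 1 : ℕ) * 3 ^ d * (2 / (n + 1)) := by
        gcongr
        exact sum_Ioo_inv_sq_le n _
    _ = (2 * d - 1) * 3 ^ d := by
        rw [Nat.cast_sub hd]
        field_simp
        ring

end LatticeHyperplane

open LatticeHyperplane

/-- For `d ≥ 3` there is `C(d)` such that for every integer `n ≥ 0`,
`Σ_{x ∈ ℤ^d, x₁ = n} (1 + min(n, |x|)) / (1 + |x|^d) ≤ C(d)`,
where `|·|` is the ℓ^∞ norm. -/
theorem stmt_12 (d : ℕ) (hd : 3 ≤ d) :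
    ∃ C : ℝ, ∀ n : ℕ,
      (∑' x : Fin d → ℤ, if x ⟨0, by omega⟩ = (n : ℤ) then
          (1 + min ((n : ℝ)) ‖x‖) / (1 + ‖x‖ ^ d) else 0) ≤ C := by
  have hC : (0 : ℝ) ≤ (2 * d - 1) * 3 ^ d := by
    have : (3 : ℝ) ≤ d := by exact_mod_cast hd
    exact mul_nonneg (by linarith) (by positivity)
  -- finite partial sums suffice: without summability the `tsum` is `0 ≤ C`
  refine ⟨(2 * d - 1) * 3 ^ d, fun n => tsum_le_of_sum_le' hC fun s => ?_⟩
  rw [← sum_filter]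
  calc _ = ∑ x ∈ s with x ⟨0, by omega⟩ = (n : ℤ),
        (1 + (n : ℤ).natAbs : ℝ) / (1 + (supNatAbs x : ℝ) ^ d) := by
        refine sum_congr rfl fun x hx => ?_
        have hn : n ≤ supNatAbs x := by
          simpa [(mem_filter.mp hx).2] using natAbs_le_supNatAbs x ⟨0, by omega⟩
        rw [norm_eq_supNatAbs, min_eq_left (by exact_mod_cast hn), Int.natAbs_natCast]
    _ ≤ _ := sum_div_one_add_supNatAbs_pow_le _ _ _ fun x hx => (mem_filter.mp hx).2
end

section
/- Let d > 6 and suppose the full-space two-point function satisfies c₀/(1+|x-y|^{d-2}) ≤ τ(x,y) ≤ C₀/(1+|x-y|^{d-2}). Suppose also the upper bounds: (i) half-space pioneer bound Σ_{u ∈ ∂B_n(x)} τ_{B_n(x)}(x,u) ≤ C₁(1+min(x₁,n))/n for all n ≥ 1, x ∈ H; and (ii) the BK decomposition τ_H(x,y) ≤ Σ_{u ∈ ∂B_n(x)} Σ_{v ∈ ∂B_n(y)} τ_{B_n(x)}(x,u) τ_H(u,v) τ_{B_n(y)}(v,y) with n = ⌊|x-y|/3⌋ ≥ 1. Then there is C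 such that for all x,y ∈ H with |x-y| ≥ 3, τ_H(x,y) ≤ C(1+r_{x,y})(1+r_{y,x})/(1+|x-y|^d), where r_{x,y} := min(x₁, |x-y|). -/
open Classical
/-- ℓ^∞ distance on `ℤ^d`, valued in `ℕ`. -/
def dinf {d : ℕ} (x y : Fin d → ℤ) : ℕ :=
  Finset.univ.sup fun i => (x i - y i).natAbs

/-- Nearest-neighbour adjacency on `ℤ^d`. -/
def adj {d : ℕ} (x y : Fin d → ℤ) : Prop := (∑ i, |x i - y i|) = 1

/-- First coordinate of a point of `ℤ^d`. -/
def coord1 {d : ℕ} (x : Fin d → ℤ) : ℤ := if h : 0 < d then x ⟨0, h⟩ else 0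

/-- The half-space `ℍ = {x : x₁ ≥ 0}`. -/
def inHalf {d : ℕ} (x : Fin d → ℤ) : Prop := 0 ≤ coord1 x

/-- The box `B_n(x) = {z ∈ ℍ : |z - x|_∞ ≤ n}`. -/
def inBox {d : ℕ} (n : ℕ) (x z : Fin d → ℤ) : Prop := inHalf z ∧ dinf z x ≤ n

/-- The inner boundary of `B_n(x)` in `ℍ`. -/
def inBdry {d : ℕ} (n : ℕ) (x z : Fin d → ℤ) : Prop :=
  inBox n x z ∧ ∃ z', adj z z' ∧ inHalf z' ∧ ¬ inBox n x z'

lemma le_dinf {d : ℕ} (x y : Fin d → ℤ) (i : Fin d) : (x i - y i).natAbs ≤ dinf x y :=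
  Finset.le_sup (f := fun i => (x i - y i).natAbs) (Finset.mem_univ i)

lemma dinf_self {d : ℕ} (x : Fin d → ℤ) : dinf x x = 0 := by
  unfold dinf; simp

lemma dinf_comm {d : ℕ} (x y : Fin d → ℤ) : dinf x y = dinf y x := by
  unfold dinf; congr 1; funext i; omega

lemma dinf_triangle {d : ℕ} (x y z : Fin d → ℤ) : dinf x z ≤ dinf x y + dinf y z := by
  apply Finset.sup_le
  intro i _
  have h1 := le_dinf x y i
  have h2 := le_dinf y z i
  omega

lemma ball_finite {d n : ℕ} (x : Fin d → ℤ) : {u : Fin d → ℤ | dinf u x ≤ n}.Finite := by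
  apply Set.Finite.subset (Set.Finite.pi (fun i => Set.finite_Icc (x i - n) (x i + n)))
  intro u hu
  simp only [Set.mem_pi, Set.mem_univ, Set.mem_Icc, forall_true_left]
  intro i
  have h1 := le_dinf u x i
  have h2 : dinf u x ≤ n := hu
  omega

/-- Key tsum manipulation: bounding a finitely-supported nonnegative double sum
by a product of single sums. -/
lemma double_sum_bound {β : Type*} (f g : β → ℝ) (h : β → β → ℝ) (K : ℝ)
    (Sf Sg : Set β) (hSf : Sf.Finite) (hSg : Sg.Finite)
    (hg0 : ∀ v, 0 ≤ g v)
    (hfsupp : ∀ u ∉ Sf, f u = 0) (hgsupp : ∀ v ∉ Sg, g v = 0)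
    (hh : ∀ u v, h u v ≤ K * f u * g v)
    (hhsupp : ∀ u v, u ∉ Sf ∨ v ∉ Sg → h u v = 0) :
    (∑' u, ∑' v, h u v) ≤ K * (∑' u, f u) * (∑' v, g v) := by
  have hsg : Summable g :=
    summable_of_ne_finset_zero (s := hSg.toFinset)
      (fun v hv => hgsupp v (by simpa using hv))
  have hsf : Summable f :=
    summable_of_ne_finset_zero (s := hSf.toFinset)
      (fun u hu => hfsupp u (by simpa using hu))
  have hinner : ∀ u, (∑' v, h u v) ≤ K * f u * (∑' v, g v) := by
    intro u
    have h1 : Summable (h u) :=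
      summable_of_ne_finset_zero (s := hSg.toFinset)
        (fun v hv => hhsupp u v (Or.inr (by simpa using hv)))
    calc (∑' v, h u v) ≤ ∑' v, (K * f u) * g v :=
          Summable.tsum_le_tsum (fun v => hh u v) h1 (hsg.mul_left _)
      _ = (K * f u) * ∑' v, g v := tsum_mul_left
  have houter : Summable (fun u => ∑' v, h u v) :=
    summable_of_ne_finset_zero (s := hSf.toFinset)
      (fun u hu => by
        have hz : ∀ v, h u v = 0 := fun v => hhsupp u v (Or.inl (by simpa using hu))
        simp [hz])
  have hs3 : Summable (fun u => K * f u * (∑' v, g v)) :=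
    (hsf.mul_left K).mul_right _
  calc (∑' u, ∑' v, h u v) ≤ ∑' u, K * f u * (∑' v, g v) :=
        Summable.tsum_le_tsum hinner houter hs3
    _ = (K * ∑' v, g v) * ∑' u, f u := by
        rw [← tsum_mul_left]
        exact tsum_congr fun u => by ring
    _ = K * (∑' u, f u) * (∑' v, g v) := by ring

/-- Upper-bound half of the main theorem: assuming the full-space two-point
function bounds, the pioneer bound (i), the BK decomposition (ii), and
`τ_H ≤ τ`, there is `C` such that for all `x, y ∈ ℍ` with `|x-y| ≥ 3`,
`τ_H(x,y) ≤ C (1+r_{x,y})(1+r_{y,x}) / (1+|x-y|^d)`, where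
`r_{x,y} = min(x₁, |x-y|)`. -/
theorem stmt_13 (d : ℕ) (hd : 6 < d) (c₀ C₀ C₁ : ℝ) (hc₀ : 0 < c₀)
    (τ τH : (Fin d → ℤ) → (Fin d → ℤ) → ℝ)
    (T : ℕ → (Fin d → ℤ) → (Fin d → ℤ) → ℝ)
    (hτlow : ∀ x y, c₀ / (1 + (dinf x y : ℝ) ^ (d - 2)) ≤ τ x y)
    (hτup : ∀ x y, τ x y ≤ C₀ / (1 + (dinf x y : ℝ) ^ (d - 2)))
    (hτH0 : ∀ x y, 0 ≤ τH x y)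
    (hτHle : ∀ x y, τH x y ≤ τ x y)
    (hT0 : ∀ n x u, 0 ≤ T n x u)
    (hpioneer : ∀ n : ℕ, 1 ≤ n → ∀ x : Fin d → ℤ, inHalf x →
      (∑' u : Fin d → ℤ, if inBdry n x u then T n x u else 0)
        ≤ C₁ * (1 + min ((coord1 x : ℝ)) (n : ℝ)) / n)
    (hBK : ∀ x y : Fin d → ℤ, inHalf x → inHalf y → 1 ≤ dinf x y / 3 →
      τH x y ≤ ∑' u : Fin d → ℤ, ∑' v : Fin d → ℤ,
        if inBdry (dinf x y / 3) x u ∧ inBdry (dinf x y / 3) y v then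
          T (dinf x y / 3) x u * τH u v * T (dinf x y / 3) y v
        else 0) :
    ∃ C : ℝ, ∀ x y : Fin d → ℤ, inHalf x → inHalf y → 3 ≤ dinf x y →
      τH x y ≤ C * (1 + min ((coord1 x : ℝ)) ((dinf x y : ℝ)))
          * (1 + min ((coord1 y : ℝ)) ((dinf x y : ℝ)))
          / (1 + (dinf x y : ℝ) ^ d) := by
  -- basic constants
  have hC₀ : 0 < C₀ := by
    have h1 := hτlow 0 0
    have h2 := hτup 0 0
    rw [dinf_self] at h1 h2
    simp only [Nat.cast_zero, zero_pow (show d - 2 ≠ 0 by omega)] at h1 h2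
    norm_num at h1 h2
    linarith
  have hC₁ : 0 ≤ C₁ := by
    have hdpos : 0 < d := by omega
    have hhalf : inHalf (0 : Fin d → ℤ) := by
      simp [inHalf, coord1, dif_pos hdpos]
    have hp := hpioneer 1 le_rfl 0 hhalf
    have h0 : (0 : ℝ) ≤ ∑' u : Fin d → ℤ, if inBdry 1 (0 : Fin d → ℤ) u then T 1 0 u else 0 :=
      tsum_nonneg fun u => by by_cases h : inBdry 1 (0 : Fin d → ℤ) u
        <;> simp [h, hT0]
    have hc1 : (coord1 (0 : Fin d → ℤ) : ℝ) = 0 := by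
      simp [coord1, dif_pos hdpos]
    rw [hc1] at hp
    norm_num at hp
    linarith
  refine ⟨2 * 9 ^ d * C₀ * C₁ ^ 2, ?_⟩
  intro x y hx hy hD3
  set D := dinf x y with hDdef
  set n := D / 3 with hndef
  have hn1 : 1 ≤ n := by omega
  have h3n : 3 * n ≤ D := by omega
  have h9n : D ≤ 9 * n := by omega
  have hnD : n ≤ D := by omega
  -- real versions
  have hN1 : (1 : ℝ) ≤ (n : ℝ) := by exact_mod_cast hn1
  have hN0 : (0 : ℝ) ≤ (n : ℝ) := by linarith
  have hDr0 : (0 : ℝ) ≤ (D : ℝ) := by positivity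
  have hDr9N : (D : ℝ) ≤ 9 * (n : ℝ) := by exact_mod_cast h9n
  have hNDr : (n : ℝ) ≤ (D : ℝ) := by exact_mod_cast hnD
  set K := C₀ / (1 + (n : ℝ) ^ (d - 2)) with hKdef
  have hK0 : 0 ≤ K := by positivity
  -- the two single-sum functions
  set f : (Fin d → ℤ) → ℝ := fun u => if inBdry n x u then T n x u else 0 with hfdef
  set g : (Fin d → ℤ) → ℝ := fun v => if inBdry n y v then T n y v else 0 with hgdef
  have hf0 : ∀ u, 0 ≤ f u := fun u => by
    by_cases h : inBdry n x u <;> simp [hfdef, h, hT0]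
  have hg0 : ∀ v, 0 ≤ g v := fun v => by
    by_cases h : inBdry n y v <;> simp [hgdef, h, hT0]
  -- finiteness of boundaries
  have hSx : {u : Fin d → ℤ | inBdry n x u}.Finite :=
    (ball_finite x).subset fun u hu => hu.1.2
  have hSy : {v : Fin d → ℤ | inBdry n y v}.Finite :=
    (ball_finite y).subset fun v hv => hv.1.2
  -- the pointwise bound on τH u v for boundary points
  have hτK : ∀ u v : Fin d → ℤ, inBdry n x u → inBdry n y v → τH u v ≤ K := by
    intro u v hu hv
    have hux : dinf u x ≤ n := hu.1.2
    have hvy : dinf v y ≤ n := hv.1.2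
    have htr1 := dinf_triangle x u y
    have htr2 := dinf_triangle u v y
    have hcx := dinf_comm u x
    have hcy := dinf_comm v y
    have hnuv : n ≤ dinf u v := by omega
    have h5 : (n : ℝ) ^ (d - 2) ≤ (dinf u v : ℝ) ^ (d - 2) :=
      pow_le_pow_left₀ hN0 (by exact_mod_cast hnuv) _
    calc τH u v ≤ τ u v := hτHle u v
      _ ≤ C₀ / (1 + (dinf u v : ℝ) ^ (d - 2)) := hτup u v
      _ ≤ K := div_le_div_of_nonneg_left hC₀.le (by positivity) (by linarith)
  -- apply the double sum bound
  have hdouble : τH x y ≤ K * (∑' u, f u) * (∑' v, g v) := by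
    have hBK' := hBK x y hx hy (by omega)
    refine le_trans hBK' ?_
    apply double_sum_bound _ _ _ K
      {u : Fin d → ℤ | inBdry n x u} {v : Fin d → ℤ | inBdry n y v} hSx hSy hg0
    · intro u hu; exact if_neg hu
    · intro v hv; exact if_neg hv
    · intro u v
      by_cases h : inBdry n x u ∧ inBdry n y v
      · rw [if_pos h]
        simp only [hfdef, hgdef, if_pos h.1, if_pos h.2]
        have hK1 := hτK u v h.1 h.2
        have t1 := hT0 n x u
        have t2 := hT0 n y v
        calc T n x u * τH u v * T n y v = (T n x u * T n y v) * τH u v := by ring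
          _ ≤ (T n x u * T n y v) * K :=
            mul_le_mul_of_nonneg_left hK1 (mul_nonneg t1 t2)
          _ = K * T n x u * T n y v := by ring
      · rw [if_neg h]
        exact mul_nonneg (mul_nonneg hK0 (hf0 u)) (hg0 v)
    · intro u v huv
      apply if_neg
      rintro ⟨h1, h2⟩
      rcases huv with h | h
      · exact h h1
      · exact h h2
  -- pioneer bounds on the single sums
  have hSfle : (∑' u, f u) ≤ C₁ * (1 + min ((coord1 x : ℝ)) (n : ℝ)) / n :=
    hpioneer n hn1 x hx
  have hSgle : (∑' v, g v) ≤ C₁ * (1 + min ((coord1 y : ℝ)) (n : ℝ)) / n :=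
    hpioneer n hn1 y hy
  have hSf0 : 0 ≤ ∑' u, f u := tsum_nonneg hf0
  have hSg0 : 0 ≤ ∑' v, g v := tsum_nonneg hg0
  -- abbreviations for the min quantities
  have hx0 : (0 : ℝ) ≤ (coord1 x : ℝ) := by exact_mod_cast hx
  have hy0 : (0 : ℝ) ≤ (coord1 y : ℝ) := by exact_mod_cast hy
  have hmx0 : (0 : ℝ) ≤ min ((coord1 x : ℝ)) (n : ℝ) := le_min hx0 hN0
  have hmy0 : (0 : ℝ) ≤ min ((coord1 y : ℝ)) (n : ℝ) := le_min hy0 hN0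
  have hMx0 : (0 : ℝ) ≤ min ((coord1 x : ℝ)) ((D : ℝ)) := le_min hx0 hDr0
  have hMy0 : (0 : ℝ) ≤ min ((coord1 y : ℝ)) ((D : ℝ)) := le_min hy0 hDr0
  have hmxM : (1 : ℝ) + min ((coord1 x : ℝ)) (n : ℝ) ≤ 1 + min ((coord1 x : ℝ)) ((D : ℝ)) := by
    have := min_le_min (le_refl ((coord1 x : ℝ))) hNDr
    linarith
  have hmyM : (1 : ℝ) + min ((coord1 y : ℝ)) (n : ℝ) ≤ 1 + min ((coord1 y : ℝ)) ((D : ℝ)) := by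
    have := min_le_min (le_refl ((coord1 y : ℝ))) hNDr
    linarith
  have hAx0 : 0 ≤ C₁ * (1 + min ((coord1 x : ℝ)) (n : ℝ)) / n := by
    apply div_nonneg (mul_nonneg hC₁ (by linarith)) hN0
  have hAy0 : 0 ≤ C₁ * (1 + min ((coord1 y : ℝ)) (n : ℝ)) / n := by
    apply div_nonneg (mul_nonneg hC₁ (by linarith)) hN0
  -- denominators
  have hNd0 : (0 : ℝ) < (n : ℝ) ^ d := by positivity
  have hden : ((n : ℝ)) ^ d ≤ (1 + (n : ℝ) ^ (d - 2)) * (n : ℝ) * (n : ℝ) := by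
    have h1 : ((n : ℝ)) ^ d = (n : ℝ) ^ (d - 2) * ((n : ℝ) * (n : ℝ)) := by
      rw [← pow_two, ← pow_add]
      congr 1
      omega
    rw [h1]
    calc (n : ℝ) ^ (d - 2) * ((n : ℝ) * (n : ℝ))
        ≤ (1 + (n : ℝ) ^ (d - 2)) * ((n : ℝ) * (n : ℝ)) := by
          apply mul_le_mul_of_nonneg_right (by linarith [pow_nonneg hN0 (d - 2)])
            (mul_nonneg hN0 hN0)
      _ = (1 + (n : ℝ) ^ (d - 2)) * (n : ℝ) * (n : ℝ) := (mul_assoc _ _ _).symm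
  have hDd : 1 + (D : ℝ) ^ d ≤ 2 * 9 ^ d * (n : ℝ) ^ d := by
    have h1 : (D : ℝ) ^ d ≤ (9 * (n : ℝ)) ^ d := pow_le_pow_left₀ hDr0 hDr9N d
    have h2 : (9 * (n : ℝ)) ^ d = 9 ^ d * (n : ℝ) ^ d := mul_pow _ _ _
    have h3 : (1 : ℝ) ^ d ≤ (n : ℝ) ^ d := pow_le_pow_left₀ zero_le_one hN1 d
    have h4 : (1 : ℝ) ^ d ≤ (9 : ℝ) ^ d := pow_le_pow_left₀ zero_le_one (by norm_num) d
    have h5 : (1 : ℝ) ≤ 9 ^ d * (n : ℝ) ^ d := by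
      rw [one_pow] at h3 h4
      nlinarith
    nlinarith
  -- final chain
  calc τH x y ≤ K * (∑' u, f u) * (∑' v, g v) := hdouble
    _ ≤ K * (C₁ * (1 + min ((coord1 x : ℝ)) (n : ℝ)) / n)
          * (C₁ * (1 + min ((coord1 y : ℝ)) (n : ℝ)) / n) := by
        apply mul_le_mul (mul_le_mul_of_nonneg_left hSfle hK0) hSgle hSg0
          (mul_nonneg hK0 hAx0)
    _ = (C₀ * (C₁ * (1 + min ((coord1 x : ℝ)) (n : ℝ)))
          * (C₁ * (1 + min ((coord1 y : ℝ)) (n : ℝ))))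
          / ((1 + (n : ℝ) ^ (d - 2)) * (n : ℝ) * (n : ℝ)) := by
        rw [hKdef, div_mul_div_comm, div_mul_div_comm]
    _ ≤ (C₀ * (C₁ * (1 + min ((coord1 x : ℝ)) ((D : ℝ))))
          * (C₁ * (1 + min ((coord1 y : ℝ)) ((D : ℝ)))))
          / ((n : ℝ)) ^ d := by
        apply div_le_div₀ (by positivity) ?_ hNd0 hden
        apply mul_le_mul
          (mul_le_mul_of_nonneg_left
            (mul_le_mul_of_nonneg_left hmxM hC₁) hC₀.le)
          (mul_le_mul_of_nonneg_left hmyM hC₁)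
          (mul_nonneg hC₁ (by linarith))
          (by positivity)
    _ ≤ 2 * 9 ^ d * C₀ * C₁ ^ 2 * (1 + min ((coord1 x : ℝ)) ((D : ℝ)))
          * (1 + min ((coord1 y : ℝ)) ((D : ℝ))) / (1 + (D : ℝ) ^ d) := by
        rw [div_le_div_iff₀ hNd0 (by positivity)]
        calc C₀ * (C₁ * (1 + min ((coord1 x : ℝ)) ((D : ℝ))))
              * (C₁ * (1 + min ((coord1 y : ℝ)) ((D : ℝ)))) * (1 + (D : ℝ) ^ d)
            = (C₀ * C₁ ^ 2 * (1 + min ((coord1 x : ℝ)) ((D : ℝ)))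
                * (1 + min ((coord1 y : ℝ)) ((D : ℝ)))) * (1 + (D : ℝ) ^ d) := by ring
          _ ≤ (C₀ * C₁ ^ 2 * (1 + min ((coord1 x : ℝ)) ((D : ℝ)))
                * (1 + min ((coord1 y : ℝ)) ((D : ℝ)))) * (2 * 9 ^ d * (n : ℝ) ^ d) := by
              apply mul_le_mul_of_nonneg_left hDd
              have : 0 ≤ C₁ ^ 2 := sq_nonneg _
              apply mul_nonneg (mul_nonneg (mul_nonneg hC₀.le this) (by linarith)) (by linarith)
          _ = 2 * 9 ^ d * C₀ * C₁ ^ 2 * (1 + min ((coord1 x : ℝ)) ((D : ℝ)))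
                * (1 + min ((coord1 y : ℝ)) ((D : ℝ))) * (n : ℝ) ^ d := by ring
end
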